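/- arXiv:1705.02584 — 9 statements merged into one kernel-verified Lean document; each statement's English description precedes it below -/
import Mathlib

section
/- Let A be a sum-free set of positive integers and m an element of A. Then for all natural numbers u ≤ v, |A ∩ ([u,v] ∪ [u+m, v+m])| ≤ v - u + 1. -/
/-! The translate by `m` of an element of `A` is never in `A`, so shifting `A ∩ [u+m, v+m]` back
by `m` lands in `[u,v] \ A`; together with `A ∩ [u,v]` this fits inside `[u,v]`. -/

open Finset

namespace Finset

variable {α : Type*} [AddRightCancelSemigroup α] [DecidableEq α]

lemma inter_map_addRight_subset_map_sdiff {A : Finset α} {m : α} (hA : ∀ x ∈ A, x + m ∉ A)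
    (s : Finset α) : A ∩ s.map (addRightEmbedding m) ⊆ (s \ A).map (addRightEmbedding m) := by
  intro y hy
  obtain ⟨hyA, x, hxs, rfl⟩ : y ∈ A ∧ ∃ x ∈ s, x + m = y := by simpa using hy
  exact mem_map_of_mem _ (mem_sdiff.2 ⟨hxs, fun hxA => hA x hxA hyA⟩)

lemma card_inter_union_map_addRight_le {A : Finset α} {m : α} (hA : ∀ x ∈ A, x + m ∉ A)
    (s : Finset α) : #(A ∩ (s ∪ s.map (addRightEmbedding m))) ≤ #s :=
  calc #(A ∩ (s ∪ s.map (addRightEmbedding m)))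
      ≤ #(A ∩ s) + #(A ∩ s.map (addRightEmbedding m)) := by
        rw [inter_union_distrib_left]; exact card_union_le _ _
    _ ≤ #(s ∩ A) + #(s \ A) := by
        rw [inter_comm A s, ← card_map (addRightEmbedding m) (s := s \ A)]
        gcongr
        exact inter_map_addRight_subset_map_sdiff hA s
    _ = #s := card_inter_add_card_sdiff s A

end Finset

theorem sumfree_two_intervals_general (A : Finset ℤ)
    (hsf : ∀ x ∈ A, ∀ y ∈ A, ∀ z ∈ A, x + y ≠ z)
    (m : ℤ) (hm : m ∈ A) (u v : ℤ) (huv : u ≤ v) :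
    ((A ∩ (Finset.Icc u v ∪ Finset.Icc (u + m) (v + m))).card : ℤ) ≤ v - u + 1 := by
  have hshift : ∀ x ∈ A, x + m ∉ A := fun x hx hxm => hsf x hx m hm _ hxm rfl
  have hcard := card_inter_union_map_addRight_le hshift (Icc u v)
  rw [map_add_right_Icc, Int.card_Icc] at hcard
  omega

theorem sumfree_two_intervals (A : Finset ℤ) (hpos : ∀ a ∈ A, 0 < a)
    (hsf : ∀ x ∈ A, ∀ y ∈ A, ∀ z ∈ A, x + y ≠ z)
    (m : ℤ) (hm : m ∈ A) (u v : ℤ) (huv : u ≤ v) :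
    ((A ∩ (Finset.Icc u v ∪ Finset.Icc (u + m) (v + m))).card : ℤ) ≤ v - u + 1 :=
  sumfree_two_intervals_general A hsf m hm u v huv
end

section
/- Let A be a sum-free set of positive integers and m an element of A. Then for every natural number u, |A ∩ [u, u+2m-1]| ≤ m. -/
/-! Fold the upper half `[u + m, u + 2m - 1]` of the interval onto the lower half `[u, u + m - 1]`
by `x ↦ x - m`. On `A` this is injective, since `x - m = y` with `x, y ∈ A` would make
`y + m = x` a sum in `A`; so `A` meets the interval in at most `m` points. -/

open Finset

theorem Finset.card_inter_Icc_le_of_forall_add_notMem {A : Finset ℤ} {m : ℤ} (hm : 0 ≤ m)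
    (hA : ∀ x ∈ A, x + m ∉ A) (u : ℤ) :
    ((A ∩ Icc u (u + 2 * m - 1)).card : ℤ) ≤ m := by
  have hfold : (A ∩ Icc u (u + 2 * m - 1)).card ≤ (Icc u (u + m - 1)).card := by
    refine card_le_card_of_injOn (fun x => if x < u + m then x else x - m) ?_ ?_
    · intro x hx
      simp only [coe_inter, Set.mem_inter_iff, mem_coe, mem_Icc] at hx ⊢
      split <;> omega
    · intro x hx y hy hxy
      simp only [coe_inter, Set.mem_inter_iff, mem_coe, mem_Icc] at hx hy hxy
      split_ifs at hxy with hx' hy' hy'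
      · exact hxy
      · exact (hA x hx.1 (by rw [hxy, sub_add_cancel]; exact hy.1)).elim
      · exact (hA y hy.1 (by rw [← hxy, sub_add_cancel]; exact hx.1)).elim
      · omega
  rw [Int.card_Icc] at hfold
  omega

theorem sumfree_interval_2m (A : Finset ℤ) (hpos : ∀ a ∈ A, 0 < a)
    (hsf : ∀ x ∈ A, ∀ y ∈ A, ∀ z ∈ A, x + y ≠ z)
    (m : ℤ) (hm : m ∈ A) (u : ℤ) :
    ((A ∩ Finset.Icc u (u + 2 * m - 1)).card : ℤ) ≤ m :=
  card_inter_Icc_le_of_forall_add_notMem (hpos m hm).le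
    (fun x hx hxm => hsf x hx m hm (x + m) hxm rfl) u
end

section
/- Let A be a sum-free set of positive integers and m an element of A. Then for all natural numbers u ≤ v, |A ∩ [u,v]| ≤ (v - u + m + 1)/2. -/
/-!
If `m ∈ A` and `A` is sum-free, then the part `B` of `A` in `[u, v]` is disjoint from its
translate `m + B` (as `m + b = b'` would be a sum in `A`), and both lie in `[u, v + m]`.
-/

open Finset
open scoped Pointwise

lemma Finset.disjoint_vadd_finset_of_sumFree {α : Type*} [Add α] [DecidableEq α]
    {A S : Finset α} (hsf : ∀ x ∈ A, ∀ y ∈ A, ∀ z ∈ A, x + y ≠ z)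
    {m : α} (hm : m ∈ A) (hS : S ⊆ A) : Disjoint S (m +ᵥ S) := by
  rw [disjoint_right]
  rintro _ hx hxS
  obtain ⟨b, hb, rfl⟩ := mem_vadd_finset.mp hx
  exact hsf m hm b (hS hb) _ (hS hxS) rfl

lemma Int.two_mul_card_le_card_Icc_of_disjoint_vadd_finset {S : Finset ℤ} {u v m : ℤ}
    (hm : 0 ≤ m) (hS : S ⊆ Icc u v) (hdisj : Disjoint S (m +ᵥ S)) :
    2 * #S ≤ #(Icc u (v + m)) := by
  have hunion : S ∪ (m +ᵥ S) ⊆ Icc u (v + m) := by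
    intro x hx
    rcases mem_union.mp hx with hxS | hxT
    · have := mem_Icc.mp (hS hxS)
      rw [mem_Icc]; omega
    · obtain ⟨b, hb, rfl⟩ := mem_vadd_finset.mp hxT
      have := mem_Icc.mp (hS hb)
      rw [vadd_eq_add, mem_Icc]; omega
  calc 2 * #S = #S + #(m +ᵥ S) := by rw [card_vadd_finset]; ring
    _ = #(S ∪ (m +ᵥ S)) := (card_union_of_disjoint hdisj).symm
    _ ≤ #(Icc u (v + m)) := card_le_card hunion

theorem sumfree_interval_half (A : Finset ℤ) (hpos : ∀ a ∈ A, 0 < a)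
    (hsf : ∀ x ∈ A, ∀ y ∈ A, ∀ z ∈ A, x + y ≠ z)
    (m : ℤ) (hm : m ∈ A) (u v : ℤ) (huv : u ≤ v) :
    2 * ((A ∩ Finset.Icc u v).card : ℤ) ≤ v - u + m + 1 := by
  have hm0 := hpos m hm
  have hcard := Int.two_mul_card_le_card_Icc_of_disjoint_vadd_finset (S := A ∩ Icc u v) hm0.le
    inter_subset_right (disjoint_vadd_finset_of_sumFree hsf hm inter_subset_left)
  rw [Int.card_Icc] at hcard
  omega
end

section
/- For every finite set A of integers, the difference set A - A contains all integers in the interval [1, 2|A| - ℓ(A) - 1], where ℓ(A) = max(A) - min(A) + 1 (interpreting the interval as empty when 2|A| - ℓ(A) - 1 < 1). -/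
/-! The translate `x +ᵥ A` and `A` both lie in the interval `[min A, max A + x]`, which has
`ℓ(A) + x` elements. If `ℓ(A) + x < 2|A|` they must meet by pigeonhole, and a common point
`a = x + b` with `a, b ∈ A` exhibits `x = a - b ∈ A - A`. -/

open Pointwise

namespace Finset

theorem mem_sub_of_card_lt_two_mul {α : Type*} [AddGroup α] [DecidableEq α] {s u : Finset α}
    {x : α} (hs : s ⊆ u) (hxs : x +ᵥ s ⊆ u) (hu : #u < 2 * #s) : x ∈ s - s := by
  obtain ⟨a, ha⟩ :=
    inter_nonempty_of_card_lt_card_add_card hs hxs (by rw [card_vadd_finset]; omega)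
  obtain ⟨has, hax⟩ := mem_inter.mp ha
  obtain ⟨b, hbs, rfl⟩ := mem_vadd_finset.mp hax
  exact mem_sub.mpr ⟨_, has, b, hbs, by simp⟩

theorem subset_Icc_min'_max' {α : Type*} [LinearOrder α] [LocallyFiniteOrder α] (s : Finset α)
    (hs : s.Nonempty) : s ⊆ Icc (s.min' hs) (s.max' hs) :=
  fun a ha => mem_Icc.mpr ⟨s.min'_le a ha, s.le_max' a ha⟩

theorem vadd_finset_subset_Icc {α : Type*} [AddCommGroup α] [PartialOrder α]
    [IsOrderedAddMonoid α] [LocallyFiniteOrder α] [DecidableEq α] {s : Finset α} {a b : α}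
    (h : s ⊆ Icc a b) (x : α) : x +ᵥ s ⊆ Icc (x + a) (x + b) := by
  intro y hy
  obtain ⟨c, hcs, rfl⟩ := mem_vadd_finset.mp hy
  obtain ⟨hac, hcb⟩ := mem_Icc.mp (h hcs)
  exact mem_Icc.mpr ⟨add_le_add_right hac x, add_le_add_right hcb x⟩

end Finset

theorem diff_set_contains_interval (A : Finset ℤ) (hA : A.Nonempty) :
    ∀ x : ℤ, 1 ≤ x → x ≤ 2 * (A.card : ℤ) - (A.max' hA - A.min' hA + 1) - 1 →
      x ∈ A - A := by
  intro x hx1 hx2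
  set m := A.min' hA
  set M := A.max' hA
  have hmM : m ≤ M := A.min'_le_max' hA
  have hA_sub : A ⊆ Finset.Icc m M := A.subset_Icc_min'_max' hA
  apply Finset.mem_sub_of_card_lt_two_mul (u := Finset.Icc m (M + x))
  · exact hA_sub.trans (Finset.Icc_subset_Icc_right (by omega))
  · exact (Finset.vadd_finset_subset_Icc hA_sub x).trans
      (Finset.Icc_subset_Icc (a₂ := m) (b₂ := M + x) (by omega) (by omega))
  · have hcard := Int.card_Icc_of_le m (M + x) (by omega)
    omega
end

section
/- Let A be a finite set of integers contained in [0, k] for some positive integer k. Then the sumset A + A contains every integer x with 2k - 2|A| + 2 ≤ x ≤ 2|A| - 2. -/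
/-!
If `x - A` and `A` both lie in a window of fewer than `2|A|` integers, they must meet, and
`a = x - b` with `a, b ∈ A` writes `x = a + b`. For `A ⊆ [0, k]` the window `[min 0 (x - k), max k x]`
is short enough when `2k - 2|A| + 2 ≤ x ≤ 2|A| - 2`.
-/

open Pointwise

namespace Finset

theorem mem_add_self_of_card_lt_two_mul {G : Type*} [AddCommGroup G] [DecidableEq G]
    {A S : Finset G} {x : G} (hA : A ⊆ S) (hxA : A.image (x - ·) ⊆ S)
    (hS : S.card < 2 * A.card) : x ∈ A + A := by
  have hcard : S.card < A.card + (A.image (x - ·)).card := by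
    rwa [card_image_of_injective _ sub_right_injective, ← two_mul]
  obtain ⟨a, ha⟩ := inter_nonempty_of_card_lt_card_add_card hA hxA hcard
  obtain ⟨haA, hax⟩ := mem_inter.mp ha
  obtain ⟨b, hbA, rfl⟩ := mem_image.mp hax
  exact mem_add.mpr ⟨b, hbA, x - b, haA, add_sub_cancel b x⟩

end Finset

theorem Int.image_sub_subset_Icc {A : Finset ℤ} {k : ℤ} (hA : A ⊆ Finset.Icc 0 k) (x : ℤ) :
    A.image (x - ·) ⊆ Finset.Icc (x - k) x := by
  intro y hy
  obtain ⟨a, ha, rfl⟩ := Finset.mem_image.mp hy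
  have := Finset.mem_Icc.mp (hA ha)
  exact Finset.mem_Icc.mpr ⟨by omega, by omega⟩

theorem sumset_contains_interval (k : ℤ) (hk : 0 < k) (A : Finset ℤ)
    (hA : A ⊆ Finset.Icc 0 k) :
    ∀ x : ℤ, 2 * k - 2 * (A.card : ℤ) + 2 ≤ x → x ≤ 2 * (A.card : ℤ) - 2 →
      x ∈ A + A := by
  intro x hx_lower hx_upper
  set S := Finset.Icc (min 0 (x - k)) (max k x)
  have hAS : A ⊆ S := hA.trans (Finset.Icc_subset_Icc (min_le_left _ _) (le_max_left _ _))
  have hxAS : A.image (x - ·) ⊆ S := (Int.image_sub_subset_Icc hA x).trans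
    (Finset.Icc_subset_Icc (min_le_right _ _) (le_max_right _ _))
  refine Finset.mem_add_self_of_card_lt_two_mul hAS hxAS ?_
  have hS : (S.card : ℤ) = max k x + 1 - min 0 (x - k) := Int.card_Icc_of_le _ _ (by omega)
  omega
end

section
/- Let n be a positive integer and let A be a sum-free subset of [n] = {1,...,n} with A containing an even number and |A| ≥ (2/5 - η)n for some real η with 1/n ≤ η ≤ 1/175². Then the greatest common divisor d(A) of the differences of elements of A equals 1. -/
/-!
Since `1/n ≤ η ≤ 1/175²`, `n ≥ 175²` and hence `|A| > n/3 + 1`. If `d(A) ≠ 1`, some prime `p`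
divides every difference of `A`. For `p ≥ 3`, `A` lies in one residue class mod `p`, so
`|A| ≤ (n - 1)/p + 1`. For `p = 2`, `A` consists of even numbers; with `a = max A`, sum-freeness makes
`A \ {a}` and `a - (A \ {a})` disjoint, and together with `a` they give `2|A| - 1` even numbers in
`[1, a]`, so `|A| ≤ n/4 + 1`.
-/

open Pointwise Finset

namespace Finset

theorem card_sub_one_mul_le_of_dvd_sub {A : Finset ℤ} {a b g : ℤ} (hg : 0 < g)
    (hA : A ⊆ Icc a b) (hne : A.Nonempty) (hdvd : ∀ x ∈ A, ∀ y ∈ A, g ∣ x - y) :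
    ((#A : ℤ) - 1) * g ≤ b - a := by
  set m := A.min' hne
  have hm : m ∈ A := A.min'_mem hne
  have hma : a ≤ m := (mem_Icc.1 (hA hm)).1
  have hmaps : ∀ x ∈ A, (x - m) / g ∈ Icc 0 ((b - a) / g) := fun x hx ↦ by
    have hmx : m ≤ x := A.min'_le x hx
    have hxb : x ≤ b := (mem_Icc.1 (hA hx)).2
    exact mem_Icc.2 ⟨Int.ediv_nonneg (by omega) hg.le, Int.ediv_le_ediv hg (by omega)⟩
  have hinj : Set.InjOn (fun x ↦ (x - m) / g) A := fun x hx y hy hxy ↦ by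
    have hx' := Int.ediv_mul_cancel (hdvd x hx m hm)
    have hy' := Int.ediv_mul_cancel (hdvd y hy m hm)
    simp only at hxy
    rw [hxy] at hx'
    omega
  have hcard : (#A : ℤ) ≤ (b - a) / g + 1 := by
    have hle := card_le_card_of_injOn _ hmaps hinj
    have hmb : m ≤ b := (mem_Icc.1 (hA hm)).2
    have : 0 ≤ (b - a) / g := Int.ediv_nonneg (by omega) hg.le
    rw [Int.card_Icc] at hle
    omega
  calc ((#A : ℤ) - 1) * g ≤ (b - a) / g * g := by gcongr; omega
    _ ≤ b - a := Int.ediv_mul_le _ hg.ne'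

theorem two_mul_card_sub_one_mul_le_of_dvd_of_sumFree {A : Finset ℤ} {n g : ℤ} (hg : 0 < g)
    (hA : A ⊆ Icc 1 n) (hne : A.Nonempty) (hdvd : ∀ x ∈ A, g ∣ x)
    (hsf : ∀ x ∈ A, ∀ y ∈ A, ∀ z ∈ A, x + y ≠ z) :
    2 * ((#A : ℤ) - 1) * g ≤ n - 1 := by
  set a := A.max' hne
  have ha : a ∈ A := A.max'_mem hne
  set S := A.erase a
  set T := S.image (a - ·)
  have hS : ∀ x ∈ S, x ∈ A ∧ 1 ≤ x ∧ x < a := fun x hx ↦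
    ⟨mem_of_mem_erase hx, (mem_Icc.1 (hA (mem_of_mem_erase hx))).1,
      lt_of_le_of_ne (A.le_max' x (mem_of_mem_erase hx)) (ne_of_mem_erase hx)⟩
  have hST : Disjoint S T := disjoint_left.2 fun x hxS hxT ↦ by
    obtain ⟨y, hyS, rfl⟩ := mem_image.1 hxT
    exact hsf y (hS y hyS).1 (a - y) (hS _ hxS).1 a ha (by ring)
  have ha_notMem : a ∉ S ∪ T := by
    simp only [T, mem_union, mem_image, not_or, not_exists, not_and]
    exact ⟨fun h ↦ (hS a h).2.2.ne rfl, fun y hy h ↦ by linarith [(hS y hy).2.1]⟩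
  have hcard : #(insert a (S ∪ T)) = 2 * (#A - 1) + 1 := by
    rw [card_insert_of_notMem ha_notMem, card_union_of_disjoint hST,
      card_image_of_injective _ sub_right_injective, card_erase_of_mem ha]
    ring
  have hsub : insert a (S ∪ T) ⊆ Icc 1 a := by
    intro x hx
    simp only [T, mem_insert, mem_union, mem_image] at hx
    rcases hx with rfl | hx | ⟨y, hy, rfl⟩
    · exact mem_Icc.2 ⟨(mem_Icc.1 (hA ha)).1, le_rfl⟩
    · exact mem_Icc.2 ⟨(hS x hx).2.1, (hS x hx).2.2.le⟩
    · exact mem_Icc.2 ⟨by linarith [(hS y hy).2.2], by linarith [(hS y hy).2.1]⟩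
  have hdvd' : ∀ x ∈ insert a (S ∪ T), g ∣ x := by
    intro x hx
    simp only [T, mem_insert, mem_union, mem_image] at hx
    rcases hx with rfl | hx | ⟨y, hy, rfl⟩
    · exact hdvd a ha
    · exact hdvd x (hS x hx).1
    · exact dvd_sub (hdvd a ha) (hdvd y (hS y hy).1)
  have := card_sub_one_mul_le_of_dvd_sub hg hsub (insert_nonempty _ _)
    fun x hx y hy ↦ dvd_sub (hdvd' x hx) (hdvd' y hy)
  have han : a ≤ n := (mem_Icc.1 (hA ha)).2
  have hA1 : 1 ≤ #A := card_pos.2 hne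
  rw [hcard] at this
  push_cast [hA1] at this
  linarith

theorem exists_prime_dvd_sub_of_gcd_sub_ne_one {A : Finset ℤ} (h : (A - A).gcd id ≠ 1) :
    ∃ p : ℕ, p.Prime ∧ ∀ x ∈ A, ∀ y ∈ A, (p : ℤ) ∣ x - y := by
  have hnatAbs : ((A - A).gcd id).natAbs ≠ 1 := fun h1 ↦ h <| by
    rw [← normalize_gcd, ← Int.abs_eq_normalize, Int.abs_eq_natAbs, h1, Nat.cast_one]
  obtain ⟨p, hp, hpd⟩ := Nat.exists_prime_and_dvd hnatAbs
  exact ⟨p, hp, fun x hx y hy ↦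
    (Int.natCast_dvd.2 hpd).trans (gcd_dvd (f := id) (sub_mem_sub hx hy))⟩

end Finset

theorem large_sumfree_with_even_gcd_one (n : ℕ) (hn : 0 < n) (A : Finset ℤ)
    (hAsub : A ⊆ Finset.Icc 1 (n : ℤ))
    (hsf : ∀ x ∈ A, ∀ y ∈ A, ∀ z ∈ A, x + y ≠ z)
    (heven : ∃ a ∈ A, Even a)
    (η : ℝ) (hη1 : 1 / (n : ℝ) ≤ η) (hη2 : η ≤ 1 / 175 ^ 2)
    (hcard : (2 / 5 - η) * (n : ℝ) ≤ (A.card : ℝ)) :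
    Finset.gcd (A - A) id = 1 := by
  by_contra hgcd
  obtain ⟨p, hp, hpdvd⟩ := exists_prime_dvd_sub_of_gcd_sub_ne_one hgcd
  obtain ⟨e, he, he_even⟩ := heven
  have hne : A.Nonempty := ⟨e, he⟩
  have hA1 : 1 ≤ #A := card_pos.2 hne
  have hsmall : ((#A : ℤ) - 1) * 3 ≤ n - 1 := by
    rcases hp.eq_two_or_odd with rfl | hp_odd
    · have hdvd : ∀ x ∈ A, (2 : ℤ) ∣ x := fun x hx ↦
        (dvd_sub_left (even_iff_two_dvd.1 he_even)).1 (mod_cast hpdvd x hx e he)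
      have := two_mul_card_sub_one_mul_le_of_dvd_of_sumFree two_pos hAsub hne hdvd hsf
      omega
    · have hp3 : (3 : ℤ) ≤ p := by have := hp.two_le; omega
      have := card_sub_one_mul_le_of_dvd_sub (by omega) hAsub hne hpdvd
      nlinarith
  have hn_pos : (0 : ℝ) < n := by exact_mod_cast hn
  have hn_large : (175 ^ 2 : ℝ) ≤ n :=
    (one_div_le_one_div hn_pos (by norm_num)).1 (hη1.trans hη2)
  have hsmallR : ((#A : ℝ) - 1) * 3 ≤ n - 1 := by exact_mod_cast hsmall
  nlinarith [mul_nonneg (sub_nonneg.2 hη2) hn_pos.le]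
end

section
/- Let C₁ be a sum-free subset of [n] with elements c₁ < c₂ < ... < c_k, let C̃₂ be a sum-free subset of [n] disjoint from C₁, and let R = [n] \ (C₁ ∪ C̃₂). If D = {c₂ - c₁, ..., c_k - c₁}, then |D ∩ C̃₂| ≤ |R| + 1. -/
/-!
Let `M` be the largest element of `D ∩ C₂`. For every other `s ∈ D ∩ C₂` the difference
`M - s` lies in `R`: it is not in `C₂` because `s + (M - s) = M`, and it is not in `C₁` because,
writing `s = c - c₁` and `M = c' - c₁`, it equals `c' - c` and `c + (c' - c) = c'`.
As `s ↦ M - s` is injective, `|D ∩ C₂| - 1 ≤ |R|`.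
-/

def SumFree {α : Type*} [Add α] (A : Finset α) : Prop :=
  ∀ x ∈ A, ∀ y ∈ A, ∀ z ∈ A, x + y ≠ z

theorem SumFree.sub_notMem {A : Finset ℕ} (hA : SumFree A) {a b : ℕ} (ha : a ∈ A) (hb : b ∈ A)
    (hab : a ≤ b) : b - a ∉ A :=
  fun h => hA a ha (b - a) h b hb (by omega)

theorem SumFree.sub_notMem_of_mem_image_sub {A : Finset ℕ} (hA : SumFree A) {m s t : ℕ}
    (hm : ∀ a ∈ A, m ≤ a) (hs : s ∈ A.image (· - m)) (ht : t ∈ A.image (· - m)) (hst : s ≤ t) :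
    t - s ∉ A := by
  obtain ⟨a, ha, rfl⟩ := Finset.mem_image.mp hs
  obtain ⟨b, hb, rfl⟩ := Finset.mem_image.mp ht
  have hma := hm a ha
  have hmb := hm b hb
  have hdiff : b - m - (a - m) = b - a := by omega
  rw [hdiff]
  exact hA.sub_notMem ha hb (by omega)

theorem Finset.card_le_card_add_one_of_forall_sub_mem {S T : Finset ℕ}
    (h : ∀ s ∈ S, ∀ t ∈ S, s < t → t - s ∈ T) : S.card ≤ T.card + 1 := by
  rcases S.eq_empty_or_nonempty with rfl | hS
  · simp
  set M := S.max' hS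
  have hle : ∀ s ∈ S.erase M, s < M := fun s hs =>
    lt_of_le_of_ne (S.le_max' s (mem_of_mem_erase hs)) (ne_of_mem_erase hs)
  have hmaps : Set.MapsTo (M - ·) (S.erase M : Set ℕ) T := fun s hs =>
    h s (mem_of_mem_erase hs) M (S.max'_mem hS) (hle s hs)
  have hinj : Set.InjOn (M - ·) (S.erase M : Set ℕ) := fun a ha b hb hab => by
    have := hle a ha
    have := hle b hb
    simp only at hab
    omega
  have := card_le_card_of_injOn _ hmaps hinj
  have := S.pred_card_le_card_erase (a := M)
  omega

theorem diff_inter_second_sumfree_general (n : ℕ) (C₁ C₂ : Finset ℕ)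
    (h2 : C₂ ⊆ Finset.Icc 1 n)
    (hne : C₁.Nonempty)
    (hsf1 : ∀ x ∈ C₁, ∀ y ∈ C₁, ∀ z ∈ C₁, x + y ≠ z)
    (hsf2 : ∀ x ∈ C₂, ∀ y ∈ C₂, ∀ z ∈ C₂, x + y ≠ z)
    (R : Finset ℕ) (hR : R = Finset.Icc 1 n \ (C₁ ∪ C₂))
    (D : Finset ℕ) (hD : D = (C₁.erase (C₁.min' hne)).image (fun c => c - C₁.min' hne)) :
    (D ∩ C₂).card ≤ R.card + 1 := by
  have hDsub : D ⊆ C₁.image (· - C₁.min' hne) :=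
    hD ▸ Finset.image_subset_image (Finset.erase_subset _ _)
  subst hR
  refine Finset.card_le_card_add_one_of_forall_sub_mem fun s hs t ht hst => ?_
  obtain ⟨hsD, hsC₂⟩ := Finset.mem_inter.mp hs
  obtain ⟨htD, htC₂⟩ := Finset.mem_inter.mp ht
  have htn := (Finset.mem_Icc.mp (h2 htC₂)).2
  simp only [Finset.mem_sdiff, Finset.mem_Icc, Finset.mem_union, not_or]
  exact ⟨⟨by omega, by omega⟩,
    SumFree.sub_notMem_of_mem_image_sub hsf1 (fun a ha => C₁.min'_le a ha)
      (hDsub hsD) (hDsub htD) hst.le,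
    SumFree.sub_notMem hsf2 hsC₂ htC₂ hst.le⟩

theorem diff_inter_second_sumfree (n : ℕ) (C₁ C₂ : Finset ℕ)
    (h1 : C₁ ⊆ Finset.Icc 1 n) (h2 : C₂ ⊆ Finset.Icc 1 n)
    (hne : C₁.Nonempty)
    (hsf1 : ∀ x ∈ C₁, ∀ y ∈ C₁, ∀ z ∈ C₁, x + y ≠ z)
    (hsf2 : ∀ x ∈ C₂, ∀ y ∈ C₂, ∀ z ∈ C₂, x + y ≠ z)
    (hdisj : Disjoint C₁ C₂)
    (R : Finset ℕ) (hR : R = Finset.Icc 1 n \ (C₁ ∪ C₂))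
    (D : Finset ℕ) (hD : D = (C₁.erase (C₁.min' hne)).image (fun c => c - C₁.min' hne)) :
    (D ∩ C₂).card ≤ R.card + 1 :=
  diff_inter_second_sumfree_general n C₁ C₂ h2 hne hsf1 hsf2 R hR D hD
end

section
/- For positive integers k and ℓ, the number p*_ℓ(k) of partitions of k into ℓ distinct positive parts satisfies p*_ℓ(k) ≤ (e²k/ℓ²)^ℓ. -/
/-!
Listing the ℓ elements of such a set in each of the ℓ! possible orders gives ℓ! distinct
compositions of k into ℓ positive parts. Subtracting 1 from every part, stars and bars counts these
compositions as C(k - 1, ℓ - 1) ≤ C(k, ℓ) ≤ k^ℓ / ℓ!. Hence p*_ℓ(k) ≤ k^ℓ / (ℓ!)², and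
ℓ^ℓ / ℓ! ≤ e^ℓ (a single term of the exponential series) turns this into the bound.
-/

open Finset Nat

theorem Finset.Nat.card_antidiagonalTuple (ℓ n : ℕ) :
    #(antidiagonalTuple ℓ n) = (ℓ + n - 1).choose n := by
  rw [← Fintype.card_coe, ← Nat.multichoose_eq, ← Sym.card_sym_fin_eq_multichoose,
    Fintype.card_congr ((Equiv.subtypeEquivRight fun _ => mem_antidiagonalTuple).trans
      (Sym.equivNatSumOfFintype (Fin ℓ) n).symm)]

theorem factorial_le_card_enumerations {α : Type*} [LinearOrder α] {ℓ : ℕ} {S : Finset α}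
    (hS : #S = ℓ) {T : Finset (Fin ℓ → α)}
    (hT : ∀ f : Fin ℓ → α, Function.Injective f → univ.image f = S → f ∈ T) :
    ℓ ! ≤ #{f ∈ T | univ.image f = S} := by
  classical
  set e := S.orderEmbOfFin hS
  have himage (σ : Equiv.Perm (Fin ℓ)) : univ.image (e ∘ σ) = S := by
    rw [← image_image, image_univ_equiv, ← coe_inj, coe_image, coe_univ, Set.image_univ,
      range_orderEmbOfFin]
  have hinj : Function.Injective fun σ : Equiv.Perm (Fin ℓ) => e ∘ σ := fun σ τ h =>
    Equiv.ext fun i => e.injective (congrFun h i)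
  calc ℓ ! = #(univ.image fun σ : Equiv.Perm (Fin ℓ) => e ∘ σ) := by
        rw [card_image_of_injective _ hinj, Finset.card_univ, Fintype.card_perm, Fintype.card_fin]
    _ ≤ _ := by
      refine card_le_card fun f hf => ?_
      obtain ⟨σ, -, rfl⟩ := mem_image.mp hf
      exact mem_filter.mpr ⟨hT _ (e.injective.comp σ.injective) (himage σ), himage σ⟩

theorem card_mul_factorial_le_card_enumerations {α : Type*} [LinearOrder α] {ℓ : ℕ}
    {A : Finset (Finset α)} (hA : ∀ S ∈ A, #S = ℓ) {T : Finset (Fin ℓ → α)}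
    (hT : ∀ f : Fin ℓ → α, Function.Injective f → univ.image f ∈ A → f ∈ T) :
    #A * ℓ ! ≤ #T := by
  classical
  calc #A * ℓ ! = ∑ _S ∈ A, ℓ ! := by rw [sum_const, smul_eq_mul]
    _ ≤ ∑ S ∈ A, #{f ∈ T | univ.image f = S} := sum_le_sum fun S hS =>
        factorial_le_card_enumerations (hA S hS) fun f hf hfS => hT f hf (hfS ▸ hS)
    _ = #{f ∈ T | univ.image f ∈ A} := sum_card_fiberwise_eq_card_filter _ _ _
    _ ≤ #T := card_filter_le _ _

def distinctPartitions (k ℓ : ℕ) : Finset (Finset ℕ) :=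
  ((range (k + 1)).powerset).filter (fun S => #S = ℓ ∧ (∀ a ∈ S, 0 < a) ∧ S.sum id = k)

theorem card_le_of_mem_distinctPartitions {k ℓ : ℕ} {S : Finset ℕ}
    (hS : S ∈ distinctPartitions k ℓ) : ℓ ≤ k := by
  obtain ⟨-, rfl, hpos, rfl⟩ := mem_filter.mp hS
  simpa using card_nsmul_le_sum S id 1 hpos

theorem mem_image_succ_antidiagonalTuple_of_enumerates {k ℓ : ℕ} {f : Fin ℓ → ℕ}
    (hf : Function.Injective f) (hfS : univ.image f ∈ distinctPartitions k ℓ) :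
    f ∈ (antidiagonalTuple ℓ (k - ℓ)).image fun P i => P i + 1 := by
  obtain ⟨-, -, hpos, hsum⟩ := mem_filter.mp hfS
  have hpos' (i : Fin ℓ) : 1 ≤ f i := hpos _ (mem_image_of_mem f (mem_univ i))
  refine mem_image.mpr ⟨fun i => f i - 1, mem_antidiagonalTuple.mpr ?_,
    funext fun i => Nat.sub_add_cancel (hpos' i)⟩
  rw [sum_tsub_distrib _ fun i _ => hpos' i, ← hsum, sum_image fun i _ j _ h => hf h]
  simp

theorem card_distinctPartitions_mul_factorial_le (k ℓ : ℕ) :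
    #(distinctPartitions k ℓ) * ℓ ! ≤ k.choose ℓ := by
  obtain hempty | ⟨S, hS⟩ := (distinctPartitions k ℓ).eq_empty_or_nonempty
  · simp [hempty]
  have hℓk := card_le_of_mem_distinctPartitions hS
  calc #(distinctPartitions k ℓ) * ℓ !
      ≤ #((antidiagonalTuple ℓ (k - ℓ)).image fun P i => P i + 1) :=
        card_mul_factorial_le_card_enumerations (fun S hS => (mem_filter.mp hS).2.1)
          fun _ hf hfS => mem_image_succ_antidiagonalTuple_of_enumerates hf hfS
    _ ≤ #(antidiagonalTuple ℓ (k - ℓ)) := card_image_le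
    _ = (ℓ + (k - ℓ) - 1).choose (k - ℓ) := card_antidiagonalTuple ℓ (k - ℓ)
    _ ≤ (ℓ + (k - ℓ)).choose (k - ℓ) := choose_mono _ (Nat.sub_le _ _)
    _ = k.choose ℓ := by rw [← choose_symm_add, Nat.add_sub_cancel' hℓk]

theorem pow_div_factorial_sq_le {x : ℝ} (hx : 0 ≤ x) (n : ℕ) :
    x ^ n / (n ! : ℝ) ^ 2 ≤ (Real.exp 1 ^ 2 * x / (n : ℝ) ^ 2) ^ n := by
  have hn : (0 : ℝ) < (n : ℝ) ^ n := by exact_mod_cast Nat.pow_self_pos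
  have hinv : 1 / (n ! : ℝ) ≤ Real.exp 1 ^ n / (n : ℝ) ^ n := by
    rw [le_div_iff₀ hn, Real.exp_one_pow, div_mul_eq_mul_div, one_mul]
    exact Real.pow_div_factorial_le_exp _ n.cast_nonneg n
  calc x ^ n / (n ! : ℝ) ^ 2 = x ^ n * (1 / (n ! : ℝ)) ^ 2 := by ring
    _ ≤ x ^ n * (Real.exp 1 ^ n / (n : ℝ) ^ n) ^ 2 := by gcongr
    _ = _ := by ring

theorem restricted_partitions_bound_general (k ℓ : ℕ) :
    ((((Finset.range (k + 1)).powerset).filter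
        (fun S => S.card = ℓ ∧ (∀ a ∈ S, 0 < a) ∧ S.sum id = k)).card : ℝ)
      ≤ (Real.exp 1 ^ 2 * (k : ℝ) / (ℓ : ℝ) ^ 2) ^ ℓ := by
  have hfac : (0 : ℝ) < ℓ ! := by exact_mod_cast ℓ.factorial_pos
  calc (#(distinctPartitions k ℓ) : ℝ) ≤ k.choose ℓ / ℓ ! := by
        rw [le_div_iff₀ hfac]; exact_mod_cast card_distinctPartitions_mul_factorial_le k ℓ
    _ ≤ k ^ ℓ / ℓ ! / ℓ ! := by gcongr; exact Nat.choose_le_pow_div ℓ k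
    _ = k ^ ℓ / (ℓ ! : ℝ) ^ 2 := by ring
    _ ≤ _ := pow_div_factorial_sq_le k.cast_nonneg ℓ

theorem restricted_partitions_bound (k ℓ : ℕ) (hk : 0 < k) (hℓ : 0 < ℓ) :
    ((((Finset.range (k + 1)).powerset).filter
        (fun S => S.card = ℓ ∧ (∀ a ∈ S, 0 < a) ∧ S.sum id = k)).card : ℝ)
      ≤ (Real.exp 1 ^ 2 * (k : ℝ) / (ℓ : ℝ) ^ 2) ^ ℓ :=
  restricted_partitions_bound_general k ℓ
end

section
/- Let y ≥ 4x be positive integers and A = {0, y, 2y} + [0, x-1] = {iy + j : i ∈ {0,1,2}, 0 ≤ j ≤ x-1}. Then |A| = 3x and |A - A| = 10x - 5. -/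
/-!
Writing `A` as the image of the box `[0, 2] × [0, x - 1]` under `(i, j) ↦ i * y + j`, the
difference set `A - A` is the image of `[-2, 2] × [-(x - 1), x - 1]` under the same map. Both
maps are injective because `y` exceeds the lengths `x - 1` and `2x - 2` of the second intervals,
so the cardinalities are `3 * x` and `5 * (2x - 1)`.
-/

open Pointwise Finset

theorem Int.Icc_sub_Icc_self (a b : ℤ) : Icc a b - Icc a b = Icc (a - b) (b - a) := by
  ext z
  simp only [mem_sub, mem_Icc]
  constructor
  · rintro ⟨u, hu, v, hv, rfl⟩
    omega
  · intro hz
    exact ⟨max a (z + a), by omega, max a (z + a) - z, by omega, by omega⟩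

theorem Finset.image_mul_left_sub {α : Type*} [Ring α] [DecidableEq α] (y : α) (s t : Finset α) :
    (s - t).image (y * ·) = s.image (y * ·) - t.image (y * ·) :=
  image_image₂_distrib (mul_sub y)

theorem Int.card_image_mul_left_Icc_add_Icc {y m n a b : ℤ} (h : b - a < y) :
    #((Icc m n).image (y * ·) + Icc a b) = #(Icc m n) * #(Icc a b) := by
  obtain hab | hab := lt_or_ge b a
  · simp [Icc_eq_empty_of_lt hab]
  have hy : y ≠ 0 := by omega
  rw [← card_image_of_injective (Icc m n) (mul_right_injective₀ hy), card_add_iff]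
  rintro ⟨_, u⟩ hiu ⟨_, v⟩ hjv huv
  simp only [Set.mem_prod, mem_coe, mem_image, mem_Icc] at hiu hjv huv
  obtain ⟨⟨i, -, rfl⟩, hu⟩ := hiu
  obtain ⟨⟨j, -, rfl⟩, hv⟩ := hjv
  have huv' : v - u = 0 :=
    Int.eq_zero_of_abs_lt_dvd (m := y) ⟨i - j, by rw [mul_sub]; omega⟩
      (abs_lt.2 ⟨by omega, by omega⟩)
  have hij : y * i = y * j := by omega
  rw [hij, show u = v by omega]

theorem three_blocks_example (x y : ℤ) (hx : 1 ≤ x) (hy : 4 * x ≤ y)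
    (A : Finset ℤ) (hA : A = ({0, y, 2 * y} : Finset ℤ) + Finset.Icc 0 (x - 1)) :
    (A.card : ℤ) = 3 * x ∧ (((A - A).card : ℤ)) = 10 * x - 5 := by
  have hblocks : ({0, y, 2 * y} : Finset ℤ) = (Icc 0 2).image (y * ·) := by
    rw [show Icc (0 : ℤ) 2 = {0, 1, 2} by rfl]
    simp [mul_comm]
  have hdiff : A - A = (Icc (-2) 2).image (y * ·) + Icc (-(x - 1)) (x - 1) := by
    rw [hA, hblocks, add_sub_add_comm, ← image_mul_left_sub, Int.Icc_sub_Icc_self,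
      Int.Icc_sub_Icc_self]
    simp only [zero_sub, sub_zero]
  constructor
  · rw [hA, hblocks, Int.card_image_mul_left_Icc_add_Icc (by omega), Int.card_Icc,
      Int.card_Icc]
    push_cast
    omega
  · rw [hdiff, Int.card_image_mul_left_Icc_add_Icc (by omega), Int.card_Icc,
      Int.card_Icc]
    push_cast
    omega
end
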